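/- Let k < K be a field extension, W ≠ 0 a k-subspace of K with W ∩ k·1 = 0, and Q = Q_{k<K}(W) the loop on W × K with multiplication (a,u)(b,v) = (a+b, u(1+b)+v(1-a)) (products in K). Then the associator subloop of Q equals 0 × K. -/

import Mathlib

/-- Multiplication of the loop `Q_{k<K}(W)` on `W × K`:
`(a,u)(b,v) = (a+b, u(1+b) + v(1-a))`, products in `K`. -/
def kqmul {k : Type*} [Field k] {K : Type*} [Field K] [Algebra k K]
    (W : Submodule k K) (p q : ↥W × K) : ↥W × K :=
  (p.1 + q.1, p.2 * (1 + (q.1 : K)) + q.2 * (1 - (p.1 : K)))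

/-- `N` is a normal subloop of `Q_{k<K}(W)`. -/
def IsNormalSubloop {k : Type*} [Field k] {K : Type*} [Field K] [Algebra k K]
    (W : Submodule k K) (N : Set (↥W × K)) : Prop :=
  ((0, 0) ∈ N) ∧
  (∀ x ∈ N, ∀ y ∈ N, kqmul W x y ∈ N) ∧
  (∀ x ∈ N, ∀ y ∈ N, ∃ z ∈ N, kqmul W x z = y) ∧
  (∀ x ∈ N, ∀ y ∈ N, ∃ z ∈ N, kqmul W z x = y) ∧
  (∀ x : ↥W × K, (kqmul W x) '' N = (fun n => kqmul W n x) '' N) ∧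
  (∀ x y : ↥W × K,
    (fun n => kqmul W x (kqmul W y n)) '' N = (fun n => kqmul W (kqmul W x y) n) '' N) ∧
  (∀ x y : ↥W × K,
    (fun n => kqmul W (kqmul W n x) y) '' N = (fun n => kqmul W n (kqmul W x y)) '' N)

/-- The quotient of `Q_{k<K}(W)` by `N` is a group: all associators lie in `N`. -/
def GroupQuotient {k : Type*} [Field k] {K : Type*} [Field K] [Algebra k K]
    (W : Submodule k K) (N : Set (↥W × K)) : Prop :=
  ∀ x y z : ↥W × K, ∃ n ∈ N, kqmul W (kqmul W x y) z = kqmul W n (kqmul W x (kqmul W y z))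

section Aux

variable {k : Type*} [Field k] {K : Type*} [Field K] [Algebra k K] {W : Submodule k K}

lemma one_add_ne (hW : ∀ x ∈ W, x ∈ Set.range (algebraMap k K) → x = 0)
    (w : ↥W) : (1 : K) + (w : K) ≠ 0 := by
  intro h
  have hw : (w : K) = -1 := eq_neg_of_add_eq_zero_right h
  have : (w : K) = 0 := hW w w.2 ⟨-1, by rw [map_neg, map_one, hw]⟩
  rw [this] at hw
  exact one_ne_zero (neg_eq_zero.mp hw.symm)

lemma one_sub_ne (hW : ∀ x ∈ W, x ∈ Set.range (algebraMap k K) → x = 0)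
    (w : ↥W) : (1 : K) - (w : K) ≠ 0 := by
  have := one_add_ne hW (-w)
  simpa [sub_eq_add_neg] using this

/-- If two maps act on `{p | p.1 = 0}` as affine maps with the same first coordinate and
invertible multipliers, their images agree. -/
lemma img_eq (s : ↥W) (c : K) (α : K) (hα : α ≠ 0) (d : K) (β : K) (hβ : β ≠ 0)
    {f g : ↥W × K → ↥W × K}
    (hf : ∀ n : ↥W × K, n.1 = 0 → f n = (s, c + n.2 * α))
    (hg : ∀ n : ↥W × K, n.1 = 0 → g n = (s, d + n.2 * β)) :
    f '' {p : ↥W × K | p.1 = 0} = g '' {p : ↥W × K | p.1 = 0} := by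
  ext q
  simp only [Set.mem_image, Set.mem_setOf_eq]
  constructor
  · rintro ⟨n, hn, rfl⟩
    refine ⟨(0, (c + n.2 * α - d) / β), rfl, ?_⟩
    rw [hg _ rfl, hf _ hn]
    field_simp
    congr 1; ring
  · rintro ⟨n, hn, rfl⟩
    refine ⟨(0, (d + n.2 * β - c) / α), rfl, ?_⟩
    rw [hf _ rfl, hg _ hn]
    field_simp
    congr 1; ring

lemma N0_normal (hW : ∀ x ∈ W, x ∈ Set.range (algebraMap k K) → x = 0) :
    IsNormalSubloop W {p : ↥W × K | p.1 = 0} := by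
  refine ⟨rfl, ?_, ?_, ?_, ?_, ?_, ?_⟩
  · intro x hx y hy
    simp only [Set.mem_setOf_eq] at *
    simp [kqmul, hx, hy]
  · intro x hx y hy
    simp only [Set.mem_setOf_eq] at hx hy
    refine ⟨(0, y.2 - x.2), rfl, ?_⟩
    refine Prod.ext ?_ ?_
    · simp [kqmul, hx, hy]
    · simp [kqmul, hx, hy]
      try ring
  · intro x hx y hy
    simp only [Set.mem_setOf_eq] at hx hy
    refine ⟨(0, y.2 - x.2), rfl, ?_⟩
    refine Prod.ext ?_ ?_
    · simp [kqmul, hx, hy]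
    · simp [kqmul, hx, hy]
      try ring
  · intro x
    refine img_eq x.1 x.2 (1 - (x.1 : K)) (one_sub_ne hW x.1) x.2 (1 + (x.1 : K))
      (one_add_ne hW x.1) (fun n hn => Prod.ext ?_ ?_) (fun n hn => Prod.ext ?_ ?_) <;>
      · simp [kqmul, hn]
        try ring
  · intro x y
    refine img_eq (x.1 + y.1) (x.2 * (1 + (y.1 : K)) + y.2 * (1 - (x.1 : K)))
      ((1 - (y.1 : K)) * (1 - (x.1 : K)))
      (mul_ne_zero (one_sub_ne hW y.1) (one_sub_ne hW x.1))
      (x.2 * (1 + (y.1 : K)) + y.2 * (1 - (x.1 : K)))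
      (1 - ((x.1 + y.1 : ↥W) : K)) (one_sub_ne hW (x.1 + y.1))
      (fun n hn => Prod.ext ?_ ?_) (fun n hn => Prod.ext ?_ ?_) <;>
      · simp [kqmul, hn]
        try push_cast
        try ring
  · intro x y
    refine img_eq (x.1 + y.1) (x.2 * (1 + (y.1 : K)) + y.2 * (1 - (x.1 : K)))
      ((1 + (x.1 : K)) * (1 + (y.1 : K)))
      (mul_ne_zero (one_add_ne hW x.1) (one_add_ne hW y.1))
      (x.2 * (1 + (y.1 : K)) + y.2 * (1 - (x.1 : K)))
      (1 + ((x.1 + y.1 : ↥W) : K)) (one_add_ne hW (x.1 + y.1))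
      (fun n hn => Prod.ext ?_ ?_) (fun n hn => Prod.ext ?_ ?_) <;>
      · simp [kqmul, hn]
        try push_cast
        try ring

lemma N0_group (hW : ∀ x ∈ W, x ∈ Set.range (algebraMap k K) → x = 0) :
    GroupQuotient W {p : ↥W × K | p.1 = 0} := by
  intro x y z
  have hs : (1 : K) + ((x.1 : K) + (y.1 : K) + (z.1 : K)) ≠ 0 := by
    have := one_add_ne hW (x.1 + y.1 + z.1)
    push_cast at this
    convert this using 2
  refine ⟨(0, (x.2 * (y.1 : K) * (z.1 : K) - z.2 * (x.1 : K) * (y.1 : K)) /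
      (1 + ((x.1 : K) + (y.1 : K) + (z.1 : K)))), rfl, ?_⟩
  simp only [kqmul, Prod.mk.injEq]
  constructor
  · refine Subtype.ext ?_
    push_cast
    ring
  · push_cast
    field_simp
    ring

end Aux

/-- for a field extension `k < K` and a nonzero `k`-subspace `W` of `K` with
`k·1 ∩ W = 0`, the associator subloop of `Q_{k<K}(W)` (the smallest normal subloop with
group quotient) equals `0 × K`. -/
theorem stmt11 {k : Type*} [Field k] {K : Type*} [Field K] [Algebra k K]
    (W : Submodule k K) (hW0 : W ≠ ⊥)
    (hW : ∀ x ∈ W, x ∈ Set.range (algebraMap k K) → x = 0) :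
    ⋂₀ {N : Set (↥W × K) | IsNormalSubloop W N ∧ GroupQuotient W N} =
      {p : ↥W × K | p.1 = 0} := by
  apply le_antisymm
  · exact Set.sInter_subset_of_mem ⟨N0_normal hW, N0_group hW⟩
  · intro p hp N hN
    simp only [Set.mem_setOf_eq] at hp hN
    obtain ⟨hNn, hNg⟩ := hN
    obtain ⟨a, ha0⟩ : ∃ a : ↥W, a ≠ 0 := by
      by_contra h
      push_neg at h
      apply hW0
      ext w
      simp only [Submodule.mem_bot]
      constructor
      · intro hw
        have := h ⟨w, hw⟩
        simpa [Subtype.ext_iff] using this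
      · rintro rfl
        exact W.zero_mem
    have haK : (a : K) ≠ 0 := fun h => ha0 (Subtype.ext h)
    have h2a' : (1 : K) + ((a : K) + (a : K)) ≠ 0 := by
      have := one_add_ne hW (a + a)
      push_cast at this
      exact this
    set κ := p.2 with hκ
    set u := κ * (1 + ((a : K) + (a : K))) / ((a : K) * (a : K)) with hu
    obtain ⟨n, hnN, hn⟩ := hNg ((0 : ↥W), u) (a, (0 : K)) (a, (0 : K))
    have hfst : n.1 = 0 := by
      have h1 := congrArg Prod.fst hn
      simp only [kqmul] at h1
      have h2 : a + a = n.1 + (a + a) := by simpa using h1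
      exact right_eq_add.mp h2
    have hsnd : n.2 = κ := by
      have h2 := congrArg Prod.snd hn
      simp only [kqmul, hfst] at h2
      push_cast at h2
      have hu2 : u * ((a : K) * (a : K)) = κ * (1 + ((a : K) + (a : K))) := by
        rw [hu]; field_simp
      have key : n.2 * (1 + ((a : K) + (a : K))) = κ * (1 + ((a : K) + (a : K))) := by
        linear_combination hu2 - h2
      exact mul_right_cancel₀ h2a' key
    have hnp : n = p := by
      have hpp : p = (p.1, p.2) := rfl
      rw [hpp, ← hκ]
      exact Prod.ext (by rw [hfst, hp]) hsnd
    rwa [hnp] at hnN
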